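/- arXiv:2105.05231 — 7 statements merged into one kernel-verified Lean document; each statement's English description precedes it below -/
import Mathlib

section
/- Let n ≥ 2, k, l, λ be integers with l ≥ λ, 2λ ≥ l, λ ≥ 0, and k ≥ 3l − 2λ, k > 0. Then there exists a probability mass function p : {0,1}^n → ℝ (i.e., p(x) ≥ 0 for all x and ∑_{x ∈ {0,1}^n} p(x) = 1) such that ∑_{x : x_j = 1} p(x) = l/k for every j ∈ {1,…,n} and ∑_{x : x_i = 1 and x_j = 1} p(x) = λ/k for every pair 1 ≤ i < j ≤ n. In particular, the function defined by p(0^n) = 1 + (2λ−3l)/k + (l−λ)/(k·2^{n−2}), p(1^n) = (1/k)(2λ − l + (l−λ)/2^{n−2}), and p(x) = (l−λ)/(k·2^{n−2}) for all other x ∈ {0,1}^n is such a probability mass function. -/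
/-!
Put mass `β = (l - λ) / (k 2^(n-2))` on every string and correct it at `0^n` and `1^n`.
Forcing the coordinates of a set `S` to be `1` leaves `2^(n - |S|)` strings, so the uniform part
contributes `2^(2 - |S|) (l - λ) / k` to the marginal of `S`, the string `1^n` adds the excess
`(2λ - l) / k` and `0^n` nothing; for `|S| = 1, 2` this gives `l / k` and `λ / k`, and the excess
at `0^n` fixes the total mass at `1`. The hypotheses on `k, l, λ` say exactly that the three
values are nonnegative.
-/

open Finset

section BooleanCube

variable {ι : Type*} [Fintype ι] [DecidableEq ι]

lemma card_filter_forall_mem_eq_true (s : Finset ι) :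
    #{x : ι → Bool | ∀ i ∈ s, x i = true} = 2 ^ (Fintype.card ι - #s) := by
  have : ({x : ι → Bool | ∀ i ∈ s, x i = true} : Finset _) =
      Fintype.piFinset fun i => if i ∈ s then {true} else univ := by
    ext x
    simp only [mem_filter, mem_univ, true_and, Fintype.mem_piFinset]
    refine forall_congr' fun i => ?_
    split_ifs <;> simp [*]
  rw [this, Fintype.card_piFinset, ← card_compl]
  simp [apply_ite card, prod_ite, compl_eq_univ_sdiff, filter_not]

lemma card_filter_eq_true (j : ι) :
    #{x : ι → Bool | x j = true} = 2 ^ (Fintype.card ι - 1) := by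
  simpa using card_filter_forall_mem_eq_true {j}

lemma card_filter_eq_true_and_eq_true {i j : ι} (hij : i ≠ j) :
    #{x : ι → Bool | x i = true ∧ x j = true} = 2 ^ (Fintype.card ι - 2) := by
  simpa [card_pair hij] using card_filter_forall_mem_eq_true {i, j}

end BooleanCube

lemma sum_ite_eq_ite_eq_const {α R : Type*} [DecidableEq α] [CommRing R] {u v : α} (huv : u ≠ v)
    (a c b : R) (s : Finset α) :
    ∑ x ∈ s, (if x = u then a else if x = v then c else b) =
      #s * b + (if u ∈ s then a - b else 0) + (if v ∈ s then c - b else 0) := by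
  have : ∀ x, (if x = u then a else if x = v then c else b) =
      b + (if u = x then a - b else 0) + (if v = x then c - b else 0) := by
    intro x
    split_ifs <;> grind
  simp only [this, sum_add_distrib, sum_const, sum_ite_eq, nsmul_eq_mul]

theorem stmt2_general (n : ℕ) (hn : 2 ≤ n) (k l lam : ℤ)
    (h1 : lam ≤ l) (h2 : l ≤ 2 * lam) (h4 : 3 * l - 2 * lam ≤ k)
    (h5 : 0 < k)
    (p : (Fin n → Bool) → ℝ)
    (hp : p = fun x : Fin n → Bool =>
      if x = (fun _ => false) then
        1 + (2 * (lam : ℝ) - 3 * (l : ℝ)) / (k : ℝ) +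
          ((l : ℝ) - (lam : ℝ)) / ((k : ℝ) * 2 ^ (n - 2))
      else if x = (fun _ => true) then
        (1 / (k : ℝ)) * (2 * (lam : ℝ) - (l : ℝ) + ((l : ℝ) - (lam : ℝ)) / 2 ^ (n - 2))
      else ((l : ℝ) - (lam : ℝ)) / ((k : ℝ) * 2 ^ (n - 2))) :
    (∀ x, 0 ≤ p x) ∧
    (∑ x : Fin n → Bool, p x) = 1 ∧
    (∀ j : Fin n,
      ∑ x ∈ Finset.univ.filter (fun x : Fin n → Bool => x j = true), p x = (l : ℝ) / (k : ℝ)) ∧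
    (∀ i j : Fin n, i < j →
      ∑ x ∈ Finset.univ.filter (fun x : Fin n → Bool => x i = true ∧ x j = true), p x
        = (lam : ℝ) / (k : ℝ)) := by
  obtain ⟨m, rfl⟩ : ∃ m, n = m + 2 := ⟨n - 2, by omega⟩
  have false_ne_true : (fun _ : Fin (m + 2) => false) ≠ fun _ => true :=
    fun h => by simpa using congrFun h 0
  rify at h1 h2 h4 h5
  subst hp
  simp only [Nat.add_sub_cancel, sum_ite_eq_ite_eq_const false_ne_true]
  refine ⟨fun x => ?_, ?_, fun j => ?_, fun i j hij => ?_⟩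
  · have hβ : 0 ≤ ((l : ℝ) - lam) / (k * 2 ^ m) := by
      apply div_nonneg <;> [linarith; positivity]
    split_ifs
    · have : -1 ≤ (2 * (lam : ℝ) - 3 * l) / k := by
        rw [le_div_iff₀ h5]
        linarith
      linarith
    · have : 0 ≤ ((l : ℝ) - lam) / 2 ^ m := by
        apply div_nonneg <;> [linarith; positivity]
      exact mul_nonneg (by positivity) (by linarith)
    · exact hβ
  · simp only [card_univ, Fintype.card_pi, Fintype.card_bool, prod_const, Fintype.card_fin,
      Nat.cast_pow, Nat.cast_ofNat, mem_univ, ↓reduceIte]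
    field_simp
    ring
  · simp only [card_filter_eq_true, Fintype.card_fin, Nat.add_one_sub_one, Nat.cast_pow,
      Nat.cast_ofNat, mem_filter, mem_univ, Bool.false_eq_true, and_false, ↓reduceIte, and_self]
    field_simp
    ring
  · simp only [card_filter_eq_true_and_eq_true hij.ne, Fintype.card_fin, add_tsub_cancel_right,
      Nat.cast_pow, Nat.cast_ofNat, mem_filter, mem_univ, Bool.false_eq_true, and_false,
      ↓reduceIte, and_self]
    field_simp
    ring

/-- for `n ≥ 2` and integers `k, l, λ` with `l ≥ λ`, `2λ ≥ l`, `λ ≥ 0`,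
`k ≥ 3l − 2λ`, `k > 0`, the explicit function `p` (with value `α` at the all-zero
string, `γ` at the all-one string, and `β` elsewhere) is a probability mass function
on `{0,1}^n` with single marginals `l/k` and pairwise marginals `λ/k`. -/
theorem stmt2 (n : ℕ) (hn : 2 ≤ n) (k l lam : ℤ)
    (h1 : lam ≤ l) (h2 : l ≤ 2 * lam) (h3 : 0 ≤ lam) (h4 : 3 * l - 2 * lam ≤ k)
    (h5 : 0 < k)
    (p : (Fin n → Bool) → ℝ)
    (hp : p = fun x : Fin n → Bool =>
      if x = (fun _ => false) then
        1 + (2 * (lam : ℝ) - 3 * (l : ℝ)) / (k : ℝ) +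
          ((l : ℝ) - (lam : ℝ)) / ((k : ℝ) * 2 ^ (n - 2))
      else if x = (fun _ => true) then
        (1 / (k : ℝ)) * (2 * (lam : ℝ) - (l : ℝ) + ((l : ℝ) - (lam : ℝ)) / 2 ^ (n - 2))
      else ((l : ℝ) - (lam : ℝ)) / ((k : ℝ) * 2 ^ (n - 2))) :
    (∀ x, 0 ≤ p x) ∧
    (∑ x : Fin n → Bool, p x) = 1 ∧
    (∀ j : Fin n,
      ∑ x ∈ Finset.univ.filter (fun x : Fin n → Bool => x j = true), p x = (l : ℝ) / (k : ℝ)) ∧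
    (∀ i j : Fin n, i < j →
      ∑ x ∈ Finset.univ.filter (fun x : Fin n → Bool => x i = true ∧ x j = true), p x
        = (lam : ℝ) / (k : ℝ)) :=
  stmt2_general n hn k l lam h1 h2 h4 h5 p hp
end

section
/- Let n, k, s be integers with 0 ≤ s < n and k ≥ 1, let l, λ be real numbers with 0 < λ ≤ l, and let p be a probability mass function on {0,1}^n satisfying ∑_{x: x_j = 1} p(x) = l/k for every j ∈ {1,…,n} and ∑_{x: x_i = 1 and x_j = 1} p(x) = λ/k for every pair 1 ≤ i < j ≤ n. Let G be a random k×n matrix with entries in {0,1} whose k rows are independent and each distributed according to p. Then for every subset U ⊆ {1,…,n} with |U| = n−s, the expectation E[ inf_{v ∈ ℝ^{n−s}} ‖G_U v − 1_k‖₂² ] is at most k − l²(n−s)/(l + λ(n−s−1)). -/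
open Finset

/-- for a random `k × n` 0/1-matrix `G` whose rows are i.i.d. from a
distribution `p` on `{0,1}^n` with single marginals `l/k` and pairwise marginals
`λ/k` (`0 < λ ≤ l`), and any set `U` of `n − s` non-stragglers (`0 ≤ s < n`), the
expected optimal squared decoding error is at most
`k − l²(n−s)/(l + λ(n−s−1))`. -/
theorem stmt3 (n k s : ℕ) (hs : s < n) (hk : 1 ≤ k) (l lam : ℝ)
    (hlam : 0 < lam) (hll : lam ≤ l)
    (p : (Fin n → Bool) → ℝ)
    (hp0 : ∀ x, 0 ≤ p x) (hp1 : ∑ x : Fin n → Bool, p x = 1)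
    (hmarg : ∀ j : Fin n,
      ∑ x ∈ Finset.univ.filter (fun x : Fin n → Bool => x j = true), p x = l / k)
    (hpair : ∀ i j : Fin n, i < j →
      ∑ x ∈ Finset.univ.filter (fun x : Fin n → Bool => x i = true ∧ x j = true), p x
        = lam / k)
    (U : Finset (Fin n)) (hU : U.card = n - s) :
    ∑ g : Fin k → Fin n → Bool, (∏ i : Fin k, p (g i)) *
        (⨅ v : {j // j ∈ U} → ℝ, ∑ i : Fin k,
          ((∑ j ∈ U.attach, (if g i j.1 then (1 : ℝ) else 0) * v j) - 1) ^ 2)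
      ≤ (k : ℝ) - l ^ 2 * ((n : ℝ) - s) / (l + lam * ((n : ℝ) - s - 1)) := by
  have hl0 : (0:ℝ) < l := lt_of_lt_of_le hlam hll
  have hkR : (0:ℝ) < k := by exact_mod_cast hk
  set m : ℕ := n - s with hm
  have hm1 : 1 ≤ m := by omega
  have hmR : (1:ℝ) ≤ (m:ℝ) := by exact_mod_cast hm1
  have hns : ((n:ℝ) - s) = (m:ℝ) := by
    rw [hm, Nat.cast_sub hs.le]
  set L : ℝ := l + lam * ((m:ℝ) - 1) with hL
  have hL0 : 0 < L := by
    have h1 : 0 ≤ lam * ((m:ℝ) - 1) := mul_nonneg hlam.le (by linarith)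
    rw [hL]; linarith
  have hLne : l + lam * ((m:ℝ) - 1) ≠ 0 := by rw [← hL]; exact hL0.ne'
  set c : ℝ := l / L with hc
  set S : (Fin n → Bool) → ℝ := fun x => ∑ j ∈ U.attach, (if x j.1 then (1:ℝ) else 0)
    with hSdef
  set q : (Fin n → Bool) → ℝ := fun x => (S x * c - 1) ^ 2 with hq
  -- Step A: bound inf by value at constant vector c
  have stepA : ∑ g : Fin k → Fin n → Bool, (∏ i : Fin k, p (g i)) *
        (⨅ v : {j // j ∈ U} → ℝ, ∑ i : Fin k,
          ((∑ j ∈ U.attach, (if g i j.1 then (1 : ℝ) else 0) * v j) - 1) ^ 2)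
      ≤ ∑ g : Fin k → Fin n → Bool, (∏ i : Fin k, p (g i)) * (∑ i : Fin k, q (g i)) := by
    apply Finset.sum_le_sum
    intro g _
    apply mul_le_mul_of_nonneg_left _ (Finset.prod_nonneg fun i _ => hp0 _)
    have hbd : BddBelow (Set.range fun v : {j // j ∈ U} → ℝ => ∑ i : Fin k,
        ((∑ j ∈ U.attach, (if g i j.1 then (1 : ℝ) else 0) * v j) - 1) ^ 2) := by
      refine ⟨0, ?_⟩
      rintro y ⟨v, rfl⟩
      positivity
    have := ciInf_le hbd (fun _ => c)
    refine this.trans_eq ?_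
    apply Finset.sum_congr rfl
    intro i _
    rw [hq, hSdef]
    simp only [← Finset.sum_mul]
  refine stepA.trans ?_
  -- independence: reduce to single-row expectation
  have key : ∑ g : Fin k → Fin n → Bool, (∏ i : Fin k, p (g i)) * (∑ i : Fin k, q (g i))
      = (k:ℝ) * ∑ x : Fin n → Bool, p x * q x := by
    have h1 : ∀ g : Fin k → Fin n → Bool,
        (∏ i : Fin k, p (g i)) * (∑ i : Fin k, q (g i))
        = ∑ i₀ : Fin k, ∏ i : Fin k, (p (g i) * if i = i₀ then q (g i) else 1) := by
      intro g
      rw [Finset.mul_sum]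
      apply Finset.sum_congr rfl
      intro i₀ _
      rw [Finset.prod_mul_distrib]
      congr 1
      rw [Finset.prod_ite_eq' Finset.univ i₀ (fun i => q (g i))]
      simp
    simp only [h1]
    rw [Finset.sum_comm]
    have h2 : ∀ i₀ : Fin k, ∑ g : Fin k → Fin n → Bool,
        ∏ i : Fin k, (p (g i) * if i = i₀ then q (g i) else 1)
        = ∑ x : Fin n → Bool, p x * q x := by
      intro i₀
      rw [← Fintype.piFinset_univ]
      rw [← Finset.prod_univ_sum (fun _ : Fin k => (Finset.univ : Finset (Fin n → Bool)))
        (fun i x => p x * if i = i₀ then q x else 1)]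
      have h3 : ∀ i : Fin k, (∑ x : Fin n → Bool, (p x * if i = i₀ then q x else 1))
          = if i = i₀ then ∑ x : Fin n → Bool, p x * q x else 1 := by
        intro i
        by_cases h : i = i₀ <;> simp [h, hp1]
      simp only [h3]
      rw [Finset.prod_ite_eq' Finset.univ i₀ (fun _ => ∑ x : Fin n → Bool, p x * q x)]
      simp
    simp only [h2]
    simp [Finset.sum_const, nsmul_eq_mul]
  rw [key]
  -- single-row moments
  have hSingle : ∀ j : Fin n, ∑ x : Fin n → Bool, p x * (if x j then (1:ℝ) else 0) = l / k := by
    intro j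
    rw [← hmarg j, Finset.sum_filter]
    apply Finset.sum_congr rfl
    intro x _
    by_cases h : x j <;> simp [h]
  have hPairAll : ∀ a b : Fin n, a ≠ b →
      ∑ x : Fin n → Bool, p x * ((if x a then (1:ℝ) else 0) * (if x b then (1:ℝ) else 0))
        = lam / k := by
    intro a b hab
    have hgen : ∀ a b : Fin n, a < b →
        ∑ x : Fin n → Bool, p x * ((if x a then (1:ℝ) else 0) * (if x b then (1:ℝ) else 0))
          = lam / k := by
      intro a b h
      rw [← hpair a b h, Finset.sum_filter]
      apply Finset.sum_congr rfl
      intro x _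
      by_cases h1 : x a <;> by_cases h2 : x b <;> simp [h1, h2]
    rcases lt_or_gt_of_ne hab with h | h
    · exact hgen a b h
    · rw [← hgen b a h]
      apply Finset.sum_congr rfl
      intro x _; ring
  have hcard : U.card = m := hU
  have hES : ∑ x : Fin n → Bool, p x * S x = (m:ℝ) * l / k := by
    simp only [hSdef, Finset.mul_sum]
    rw [Finset.sum_comm]
    have h : ∀ j : {j // j ∈ U}, ∑ x : Fin n → Bool, p x * (if x j.1 then (1:ℝ) else 0)
        = l / k := fun j => hSingle j.1
    rw [Finset.sum_congr rfl (fun j _ => h j)]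
    simp [Finset.card_attach, hcard]
    ring
  have hES2 : ∑ x : Fin n → Bool, p x * (S x) ^ 2
      = ((m:ℝ) * l + (m:ℝ) * ((m:ℝ) - 1) * lam) / k := by
    have hinner : ∀ j : {j // j ∈ U}, ∑ j' ∈ U.attach, ∑ x : Fin n → Bool,
        p x * ((if x j.1 then (1:ℝ) else 0) * (if x j'.1 then (1:ℝ) else 0))
        = (m:ℝ) * (lam / k) + (l / k - lam / k) := by
      intro j
      have h : ∀ j' : {j // j ∈ U}, (∑ x : Fin n → Bool,
          p x * ((if x j.1 then (1:ℝ) else 0) * (if x j'.1 then (1:ℝ) else 0)))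
          = lam / k + (if j' = j then l / k - lam / k else 0) := by
        intro j'
        by_cases h : j' = j
        · subst h
          have hh : ∀ x : Fin n → Bool,
              p x * ((if x j'.1 then (1:ℝ) else 0) * (if x j'.1 then (1:ℝ) else 0))
              = p x * (if x j'.1 then (1:ℝ) else 0) := by
            intro x; by_cases hx : x j'.1 <;> simp [hx]
          rw [Finset.sum_congr rfl (fun x _ => hh x), hSingle j'.1]
          simp
        · have hne : j.1 ≠ j'.1 := by
            intro hh; exact h (Subtype.ext hh.symm)
          rw [hPairAll j.1 j'.1 hne]
          simp [h]
      rw [Finset.sum_congr rfl (fun j' _ => h j')]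
      rw [Finset.sum_add_distrib, Finset.sum_ite_eq' U.attach j
        (fun _ => l / k - lam / k)]
      simp [Finset.card_attach, hcard]
    have hsq : ∀ x : Fin n → Bool, p x * (S x) ^ 2
        = ∑ j ∈ U.attach, ∑ j' ∈ U.attach,
            p x * ((if x j.1 then (1:ℝ) else 0) * (if x j'.1 then (1:ℝ) else 0)) := by
      intro x
      have h0 : (S x) ^ 2 = ∑ j ∈ U.attach, ∑ j' ∈ U.attach,
          ((if x j.1 then (1:ℝ) else 0) * (if x j'.1 then (1:ℝ) else 0)) := by
        simp only [hSdef]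
        rw [sq, Finset.sum_mul_sum]
      rw [h0, Finset.mul_sum]
      exact Finset.sum_congr rfl fun j _ => Finset.mul_sum _ _ _
    rw [Finset.sum_congr rfl (fun x _ => hsq x)]
    rw [Finset.sum_comm]
    have : ∀ j : {j // j ∈ U}, (∑ x : Fin n → Bool, ∑ j' ∈ U.attach,
        p x * ((if x j.1 then (1:ℝ) else 0) * (if x j'.1 then (1:ℝ) else 0)))
        = (m:ℝ) * (lam / k) + (l / k - lam / k) := by
      intro j
      rw [Finset.sum_comm]
      exact hinner j
    rw [Finset.sum_congr rfl (fun j _ => this j)]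
    simp only [Finset.sum_const, Finset.card_attach, hcard, nsmul_eq_mul]
    field_simp
    ring
  -- per-row expectation
  have hExp : ∑ x : Fin n → Bool, p x * q x = 1 - (m:ℝ) * l ^ 2 / (L * k) := by
    have h : ∀ x : Fin n → Bool, p x * q x
        = c ^ 2 * (p x * (S x) ^ 2) - 2 * c * (p x * S x) + p x := by
      intro x; rw [hq]; ring
    rw [Finset.sum_congr rfl (fun x _ => h x)]
    rw [Finset.sum_add_distrib, Finset.sum_sub_distrib, ← Finset.mul_sum, ← Finset.mul_sum,
      hES, hES2, hp1, hc, hL]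
    field_simp
    ring
  rw [hExp, hns, ← hL]
  have heq : (k:ℝ) * (1 - (m:ℝ) * l ^ 2 / (L * k)) = (k:ℝ) - l ^ 2 * (m:ℝ) / L := by
    field_simp
  rw [heq]
end

section
/- Let G be an (n,k,l,λ)-GC with l > λ ≥ 0, let 0 ≤ s ≤ n be an integer, and let U ⊆ {1,…,n} be any subset with |U| = n−s. Then inf_{v ∈ ℝ^{n−s}} ‖G_U v − 1_k‖₂² = k − l²(n−s)/(l + λ(n−s−1)), and this infimum is attained at the constant vector v = (l/(l + λ(n−s−1)))·1_{n−s}. -/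
set_option maxHeartbeats 1000000 in
/-- for an `(n,k,l,λ)`-GC `G` with `l > λ ≥ 0`, any `0 ≤ s ≤ n`, and any
set `U` of `n − s` columns, the optimal squared decoding error equals
`k − l²(n−s)/(l + λ(n−s−1))`, and the infimum is attained at the constant decoding
vector `(l/(l + λ(n−s−1)))·1_{n−s}`. -/
theorem stmt5 (n k : ℕ) (l lam : ℕ) (hl : lam < l)
    (G : Matrix (Fin k) (Fin n) ℝ)
    (hbin : ∀ i j, G i j = 0 ∨ G i j = 1)
    (hcol : ∀ j, ∑ i : Fin k, G i j = (l : ℝ))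
    (hint : ∀ j j' : Fin n, j ≠ j' → ∑ i : Fin k, G i j * G i j' = (lam : ℝ))
    (s : ℕ) (hs : s ≤ n) (U : Finset (Fin n)) (hU : U.card = n - s) :
    (⨅ v : {j // j ∈ U} → ℝ, ∑ i : Fin k, ((∑ j ∈ U.attach, G i j.1 * v j) - 1) ^ 2)
        = (k : ℝ) - (l : ℝ) ^ 2 * ((n : ℝ) - s) / ((l : ℝ) + (lam : ℝ) * ((n : ℝ) - s - 1)) ∧
    (∑ i : Fin k,
        ((∑ j ∈ U.attach, G i j.1 * ((l : ℝ) / ((l : ℝ) + (lam : ℝ) * ((n : ℝ) - s - 1)))) - 1) ^ 2)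
        = (k : ℝ) - (l : ℝ) ^ 2 * ((n : ℝ) - s) / ((l : ℝ) + (lam : ℝ) * ((n : ℝ) - s - 1)) := by
  set m : ℝ := (n : ℝ) - s with hmdef
  set D : ℝ := (l : ℝ) + (lam : ℝ) * (m - 1) with hDdef
  have hmnat : ((n - s : ℕ) : ℝ) = m := by
    rw [hmdef, Nat.cast_sub hs]
  have hmnn : (0 : ℝ) ≤ m := by rw [← hmnat]; positivity
  have hlam0 : (0 : ℝ) ≤ (lam : ℝ) := Nat.cast_nonneg _
  have hll : (lam : ℝ) < (l : ℝ) := by exact_mod_cast hl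
  have hD : (0 : ℝ) < D := by nlinarith
  have hcard : (U.card : ℝ) = m := by rw [hU, hmnat]
  -- diagonal column fact
  have hdiag : ∀ j : Fin n, ∑ i : Fin k, G i j * G i j = (l : ℝ) := by
    intro j
    rw [← hcol j]
    refine Finset.sum_congr rfl fun i _ => ?_
    rcases hbin i j with h | h <;> rw [h] <;> ring
  -- key identity
  have key : ∀ v : {j // j ∈ U} → ℝ,
      (∑ i : Fin k, ((∑ j ∈ U.attach, G i j.1 * v j) - 1) ^ 2)
      = ((l : ℝ) - lam) * (∑ j ∈ U.attach, (v j) ^ 2)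
        + lam * (∑ j ∈ U.attach, v j) ^ 2
        - 2 * l * (∑ j ∈ U.attach, v j) + k := by
    intro v
    have e1 : ∀ i : Fin k, ((∑ j ∈ U.attach, G i j.1 * v j) - 1) ^ 2
        = (∑ j ∈ U.attach, G i j.1 * v j) ^ 2
          - 2 * (∑ j ∈ U.attach, G i j.1 * v j) + 1 := fun i => by ring
    rw [Finset.sum_congr rfl fun i _ => e1 i]
    rw [Finset.sum_add_distrib, Finset.sum_sub_distrib, ← Finset.mul_sum,
      Finset.sum_const, Finset.card_univ, Fintype.card_fin, nsmul_eq_mul, mul_one]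
    -- linear term
    have hlin : (∑ i : Fin k, ∑ j ∈ U.attach, G i j.1 * v j)
        = l * (∑ j ∈ U.attach, v j) := by
      rw [Finset.sum_comm]
      rw [Finset.mul_sum]
      refine Finset.sum_congr rfl fun j _ => ?_
      rw [← Finset.sum_mul, hcol j.1]
    -- quadratic term
    have hquad : (∑ i : Fin k, (∑ j ∈ U.attach, G i j.1 * v j) ^ 2)
        = ((l : ℝ) - lam) * (∑ j ∈ U.attach, (v j) ^ 2)
          + lam * (∑ j ∈ U.attach, v j) ^ 2 := by
      have e2 : ∀ i : Fin k, (∑ j ∈ U.attach, G i j.1 * v j) ^ 2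
          = ∑ j ∈ U.attach, ∑ j' ∈ U.attach,
              (G i j.1 * G i j'.1) * (v j * v j') := by
        intro i
        rw [sq, Finset.sum_mul_sum]
        exact Finset.sum_congr rfl fun j _ => Finset.sum_congr rfl fun j' _ => by ring
      rw [Finset.sum_congr rfl fun i _ => e2 i, Finset.sum_comm]
      have e3 : ∀ j ∈ U.attach, (∑ i : Fin k, ∑ j' ∈ U.attach,
            (G i j.1 * G i j'.1) * (v j * v j'))
          = ∑ j' ∈ U.attach,
              (if j' = j then (l : ℝ) else (lam : ℝ)) * (v j * v j') := by
        intro j _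
        rw [Finset.sum_comm]
        refine Finset.sum_congr rfl fun j' _ => ?_
        rw [← Finset.sum_mul]
        congr 1
        by_cases h : j' = j
        · rw [if_pos h, h, hdiag]
        · rw [if_neg h]
          have : j.1 ≠ j'.1 := fun hh => h (Subtype.ext hh.symm)
          rw [hint j.1 j'.1 this]
      rw [Finset.sum_congr rfl e3]
      have e4 : ∀ j ∈ U.attach, (∑ j' ∈ U.attach,
            (if j' = j then (l : ℝ) else (lam : ℝ)) * (v j * v j'))
          = ((l : ℝ) - lam) * (v j) ^ 2 + lam * (v j * ∑ j' ∈ U.attach, v j') := by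
        intro j hj
        have : ∀ j' ∈ U.attach, (if j' = j then (l : ℝ) else (lam : ℝ)) * (v j * v j')
            = (if j' = j then ((l : ℝ) - lam) * (v j) ^ 2 else 0)
              + lam * (v j * v j') := by
          intro j' _
          by_cases h : j' = j
          · rw [if_pos h, if_pos h, h]; ring
          · rw [if_neg h, if_neg h]; ring
        rw [Finset.sum_congr rfl this, Finset.sum_add_distrib,
          Finset.sum_ite_eq' U.attach j (fun _ => ((l : ℝ) - lam) * (v j) ^ 2),
          if_pos hj, ← Finset.mul_sum, ← Finset.mul_sum]
      rw [Finset.sum_congr rfl e4, Finset.sum_add_distrib, ← Finset.mul_sum,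
        ← Finset.mul_sum, ← Finset.sum_mul, sq]
    rw [hlin, hquad]
    ring
  have hattach : (U.attach.card : ℝ) = m := by rw [Finset.card_attach, hcard]
  -- lower bound for all v
  have lb : ∀ v : {j // j ∈ U} → ℝ,
      (k : ℝ) - (l : ℝ) ^ 2 * m / D
        ≤ ∑ i : Fin k, ((∑ j ∈ U.attach, G i j.1 * v j) - 1) ^ 2 := by
    intro v
    rw [key v]
    set S : ℝ := ∑ j ∈ U.attach, v j with hS
    set Q : ℝ := ∑ j ∈ U.attach, (v j) ^ 2 with hQ
    have hQS : S ^ 2 ≤ m * Q := by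
      have := sq_sum_le_card_mul_sum_sq (s := U.attach) (f := v)
      calc S ^ 2 ≤ (U.attach.card : ℝ) * Q := by exact_mod_cast this
        _ = m * Q := by rw [hattach]
    have hQ0 : (0 : ℝ) ≤ Q := Finset.sum_nonneg fun j _ => sq_nonneg _
    have main : (2 * l * S - ((l : ℝ) - lam) * Q - lam * S ^ 2) ≤ (l : ℝ) ^ 2 * m / D := by
      rw [le_div_iff₀ hD]
      rcases hmnn.eq_or_lt with hm0 | hm0
      · have hS0 : S = 0 := by nlinarith [sq_nonneg S]
        rw [hS0, ← hm0]
        nlinarith [mul_nonneg (mul_nonneg (sub_nonneg.2 hll.le) hQ0) hD.le]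
      · rw [hDdef] at hD ⊢
        nlinarith [sq_nonneg (((l : ℝ) + (lam : ℝ) * (m - 1)) * S - l * m),
          mul_nonneg (mul_nonneg (sub_nonneg.2 hll.le) (sub_nonneg.2 hQS)) hD.le,
          mul_pos hm0 hD]
    linarith
  -- value at the constant vector
  have hval : (∑ i : Fin k,
        ((∑ j ∈ U.attach, G i j.1 * ((l : ℝ) / D)) - 1) ^ 2)
      = (k : ℝ) - (l : ℝ) ^ 2 * m / D := by
    rw [key (fun _ => (l : ℝ) / D)]
    rw [Finset.sum_const, Finset.sum_const, nsmul_eq_mul, nsmul_eq_mul, hattach]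
    have hDne : D ≠ 0 := ne_of_gt hD
    field_simp
    ring
  constructor
  · refine le_antisymm ?_ (le_ciInf lb)
    calc (⨅ v : {j // j ∈ U} → ℝ, ∑ i : Fin k, ((∑ j ∈ U.attach, G i j.1 * v j) - 1) ^ 2)
        ≤ ∑ i : Fin k, ((∑ j ∈ U.attach, G i j.1 * ((l : ℝ) / D)) - 1) ^ 2 :=
          ciInf_le ⟨(k : ℝ) - (l : ℝ) ^ 2 * m / D, by
            rintro x ⟨v, rfl⟩; exact lb v⟩ _
      _ = (k : ℝ) - (l : ℝ) ^ 2 * m / D := hval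
  · exact hval
end

section
/- Let G be an (n,k,l,r)-FRC with l, r ≥ 1, and let 0 ≤ s ≤ n be an integer. Then the normalized worst-case squared error satisfies err(G,s) = (l/k)·⌊s/r⌋. -/
/-- The optimal squared decoding error of a gradient code `G` on the set `U` of
non-straggling columns: `inf_v ‖G_U v − 1‖₂²`. -/
noncomputable def sqErr {K N : Type*} [Fintype K] (G : Matrix K N ℝ) (U : Finset N) : ℝ :=
  ⨅ v : {j // j ∈ U} → ℝ, ∑ i : K, ((∑ j ∈ U.attach, G i j.1 * v j) - 1) ^ 2

/-- The normalized worst-case squared error of a gradient code `G` with `s`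
stragglers: `(1/k) · max_{|U| = n − s} inf_v ‖G_U v − 1‖₂²`. -/
noncomputable def err {K N : Type*} [Fintype K] [Fintype N]
    (G : Matrix K N ℝ) (s : ℕ) : ℝ :=
  (1 / (Fintype.card K : ℝ)) *
    ⨆ U : {U : Finset N // U.card = Fintype.card N - s}, sqErr G U.1

/-- The `(n,k,l,r)`-FRC with `n = t·r` and `k = t·l`: the block-diagonal matrix
`I_t ⊗ J_{l×r}` with `t` diagonal copies of the `l × r` all-one matrix. -/
def FRC (t l r : ℕ) : Matrix (Fin (t * l)) (Fin (t * r)) ℝ :=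
  Matrix.of fun i j => if (i : ℕ) / l = (j : ℕ) / r then 1 else 0

open Finset

lemma sum_div_blocks {M : Type*} [AddCommMonoid M] (t m : ℕ) (f : ℕ → M) :
    ∑ i : Fin (t * m), f ((i : ℕ) / m) = ∑ b : Fin t, m • f (b : ℕ) := by
  rcases Nat.eq_zero_or_pos m with hm | hm
  · subst hm; simp
  rw [← Fintype.sum_equiv (finProdFinEquiv (m := t) (n := m))
      (fun p => f ((p.1 : ℕ))) (fun i => f ((i : ℕ) / m)) ?_]
  · rw [Fintype.sum_prod_type]
    simp [Finset.sum_const]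
  · intro p
    simp only [finProdFinEquiv_apply_val]
    congr 1
    rw [Nat.add_mul_div_left _ _ hm, Nat.div_eq_of_lt p.2.2, Nat.zero_add]

lemma card_filter_lt (n a : ℕ) (h : a ≤ n) :
    (univ.filter fun j : Fin n => (j : ℕ) < a).card = a := by
  have : (univ.filter fun j : Fin n => (j : ℕ) < a)
      = (univ : Finset (Fin a)).map (Fin.castLEEmb h) := by
    ext j
    simp only [mem_filter, mem_univ, true_and, mem_map]
    constructor
    · intro hj; exact ⟨⟨(j : ℕ), hj⟩, by simp [Fin.castLEEmb, Fin.ext_iff]⟩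
    · rintro ⟨i, rfl⟩; simpa [Fin.castLEEmb] using i.2
  simp [this]

/-- The set of "dead" blocks for survivor set `U`. -/
def deadSet (t r : ℕ) (U : Finset (Fin (t * r))) : Finset (Fin t) :=
  univ.filter (fun b => ∀ j ∈ U, (j : ℕ) / r ≠ (b : ℕ))

lemma sum_FRC (t l r : ℕ) (U : Finset (Fin (t * r))) (v : {j // j ∈ U} → ℝ) :
    ∑ i : Fin (t * l), ((∑ j ∈ U.attach, FRC t l r i j.1 * v j) - 1) ^ 2
      = ∑ b : Fin t,
          l • (((∑ j ∈ U.attach, (if (b : ℕ) = ((j.1 : ℕ)) / r then v j else 0)) - 1) ^ 2) := by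
  have := sum_div_blocks (M := ℝ) t l
    (fun b => ((∑ j ∈ U.attach, (if b = ((j.1 : ℕ)) / r then v j else 0)) - 1) ^ 2)
  rw [← this]
  apply Finset.sum_congr rfl
  intro i _
  congr 1
  congr 1
  apply Finset.sum_congr rfl
  intro j _
  simp [FRC, ite_mul]

lemma sqErr_FRC (t l r : ℕ) (hr : 1 ≤ r) (U : Finset (Fin (t * r))) :
    sqErr (FRC t l r) U = (l : ℝ) * ((deadSet t r U).card : ℝ) := by
  unfold sqErr
  have hbdd : BddBelow (Set.range fun v : {j // j ∈ U} → ℝ =>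
      ∑ i : Fin (t * l), ((∑ j ∈ U.attach, FRC t l r i j.1 * v j) - 1) ^ 2) := by
    refine ⟨0, ?_⟩
    rintro x ⟨v, rfl⟩
    positivity
  -- the term for a dead block is 1 regardless of v
  have hdead : ∀ (v : {j // j ∈ U} → ℝ) (b : Fin t), b ∈ deadSet t r U →
      ((∑ j ∈ U.attach, (if (b : ℕ) = ((j.1 : ℕ)) / r then v j else 0)) - 1) ^ 2 = 1 := by
    intro v b hb
    simp only [deadSet, mem_filter, mem_univ, true_and] at hb
    have : ∑ j ∈ U.attach, (if (b : ℕ) = ((j.1 : ℕ)) / r then v j else 0) = 0 := by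
      apply Finset.sum_eq_zero
      intro j _
      rw [if_neg]
      exact fun h => hb j.1 j.2 h.symm
    rw [this]; norm_num
  apply le_antisymm
  · -- pick the averaging vector
    set v₀ : {j // j ∈ U} → ℝ := fun j =>
      ((U.filter (fun j' : Fin (t * r) => (j' : ℕ) / r = (j.1 : ℕ) / r)).card : ℝ)⁻¹ with hv₀
    refine le_trans (ciInf_le hbdd v₀) ?_
    rw [sum_FRC]
    have hterm : ∀ b : Fin t,
        l • (((∑ j ∈ U.attach, (if (b : ℕ) = ((j.1 : ℕ)) / r then v₀ j else 0)) - 1) ^ 2)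
          = if b ∈ deadSet t r U then (l : ℝ) else 0 := by
      intro b
      by_cases hb : b ∈ deadSet t r U
      · rw [hdead v₀ b hb, if_pos hb]; simp
      · rw [if_neg hb]
        have halive : ∃ j ∈ U, (j : ℕ) / r = (b : ℕ) := by
          simp only [deadSet, mem_filter, mem_univ, true_and] at hb
          push_neg at hb
          exact hb
        have hc : 0 < (U.filter (fun j' : Fin (t * r) => (j' : ℕ) / r = (b : ℕ))).card := by
          obtain ⟨j, hjU, hj⟩ := halive
          exact Finset.card_pos.mpr ⟨j, Finset.mem_filter.mpr ⟨hjU, hj⟩⟩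
        have : ∑ j ∈ U.attach, (if (b : ℕ) = ((j.1 : ℕ)) / r then v₀ j else 0) = 1 := by
          rw [show (fun j : {j // j ∈ U} => (if (b : ℕ) = ((j.1 : ℕ)) / r then v₀ j else 0))
            = fun j => (if (b : ℕ) = ((j.1 : ℕ)) / r then
                ((U.filter (fun j' : Fin (t * r) => (j' : ℕ) / r = (j.1 : ℕ) / r)).card : ℝ)⁻¹ else 0) from rfl]
          rw [Finset.sum_attach U (fun j => (if (b : ℕ) = ((j : ℕ)) / r then
                ((U.filter (fun j' : Fin (t * r) => (j' : ℕ) / r = (j : ℕ) / r)).card : ℝ)⁻¹ else 0))]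
          have : ∀ j ∈ U, (if (b : ℕ) = ((j : ℕ)) / r then
                ((U.filter (fun j' : Fin (t * r) => (j' : ℕ) / r = (j : ℕ) / r)).card : ℝ)⁻¹ else 0)
              = (if (j : ℕ) / r = (b : ℕ) then
                ((U.filter (fun j' : Fin (t * r) => (j' : ℕ) / r = (b : ℕ))).card : ℝ)⁻¹ else 0) := by
            intro j _
            by_cases h : (b : ℕ) = (j : ℕ) / r
            · rw [if_pos h, if_pos h.symm, ← h]
            · rw [if_neg h, if_neg (fun hh => h hh.symm)]
          rw [Finset.sum_congr rfl this, ← Finset.sum_filter, Finset.sum_const,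
            nsmul_eq_mul, mul_inv_cancel₀]
          exact_mod_cast hc.ne'
        rw [this]; simp
    rw [Finset.sum_congr rfl (fun b _ => hterm b), Finset.sum_ite_mem,
      Finset.univ_inter, Finset.sum_const, nsmul_eq_mul, mul_comm]
  · refine le_ciInf fun v => ?_
    rw [sum_FRC]
    calc (l : ℝ) * ((deadSet t r U).card : ℝ)
        = ∑ b ∈ deadSet t r U,
            l • (((∑ j ∈ U.attach, (if (b : ℕ) = ((j.1 : ℕ)) / r then v j else 0)) - 1) ^ 2) := by
          rw [Finset.sum_congr rfl (fun b hb => by rw [hdead v b hb])]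
          simp [mul_comm]
      _ ≤ _ := by
          apply Finset.sum_le_sum_of_subset_of_nonneg (Finset.subset_univ _)
          intro b _ _
          positivity

lemma deadSet_card_le (t r s : ℕ) (hr : 1 ≤ r)
    (U : Finset (Fin (t * r))) (hU : U.card = t * r - s) (hs : s ≤ t * r) :
    (deadSet t r U).card ≤ s / r := by
  classical
  set C := univ.filter (fun j : Fin (t * r) => ∀ j' ∈ U, (j' : ℕ) / r ≠ (j : ℕ) / r) with hC
  have hCcard : C.card = r * (deadSet t r U).card := by
    have h1 := sum_div_blocks (M := ℕ) t r
      (fun x => if (∀ j' ∈ U, (j' : ℕ) / r ≠ x) then 1 else 0)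
    calc C.card
        = ∑ j : Fin (t * r),
            (fun x => if (∀ j' ∈ U, (j' : ℕ) / r ≠ x) then 1 else 0) ((j : ℕ) / r) := by
          rw [hC, Finset.card_filter]
      _ = ∑ b : Fin t,
            r • (fun x => if (∀ j' ∈ U, (j' : ℕ) / r ≠ x) then 1 else 0) ((b : ℕ)) := h1
      _ = r * (deadSet t r U).card := by
          rw [deadSet, Finset.card_filter, Finset.mul_sum]
          apply Finset.sum_congr rfl; intro b _; rw [smul_eq_mul]
  have hsub : C ⊆ univ \ U := by
    intro j hj
    rw [Finset.mem_sdiff]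
    refine ⟨Finset.mem_univ _, fun hjU => ?_⟩
    rw [hC, Finset.mem_filter] at hj
    exact hj.2 j hjU rfl
  have hslack : (univ \ U).card = s := by
    rw [Finset.card_sdiff_of_subset (Finset.subset_univ _), Finset.card_univ, Fintype.card_fin, hU]
    omega
  have hle := Finset.card_le_card hsub
  rw [hCcard, hslack] at hle
  rw [Nat.le_div_iff_mul_le hr, mul_comm]
  omega

lemma filter_ge_card (n a : ℕ) (h : a ≤ n) :
    (univ.filter fun j : Fin n => a ≤ (j : ℕ)).card = n - a := by
  have heq : (univ.filter fun j : Fin n => a ≤ (j : ℕ))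
      = (univ.filter fun j : Fin n => ¬ (j : ℕ) < a) := by
    apply Finset.filter_congr; intro j _; simp [not_lt]
  rw [heq]
  have h2 := Finset.card_filter_add_card_filter_not
    (s := (univ : Finset (Fin n))) (p := fun j : Fin n => (j : ℕ) < a)
  rw [card_filter_lt n a h, Finset.card_univ, Fintype.card_fin] at h2
  omega

lemma deadSet_W (t r s : ℕ) (hr : 1 ≤ r) (hs : s ≤ t * r) :
    (deadSet t r (univ.filter fun j : Fin (t * r) => s ≤ (j : ℕ))).card = s / r := by
  have hdr : s / r ≤ t := by
    have h1 := Nat.div_le_div_right (c := r) hs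
    rwa [Nat.mul_div_cancel t hr] at h1
  have heq : deadSet t r (univ.filter fun j : Fin (t * r) => s ≤ (j : ℕ))
      = univ.filter (fun b : Fin t => (b : ℕ) < s / r) := by
    ext b
    simp only [deadSet, mem_filter, mem_univ, true_and]
    constructor
    · intro hb
      by_contra hlt
      push_neg at hlt
      have hblt : (b : ℕ) < t := b.2
      have he1 : ((b : ℕ) + 1) * r = (b : ℕ) * r + r := by ring
      have hj : (b : ℕ) * r + (r - 1) < t * r := by
        have h2 : ((b : ℕ) + 1) * r ≤ t * r := Nat.mul_le_mul_right r hblt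
        omega
      have hjval : ((⟨(b : ℕ) * r + (r - 1), hj⟩ : Fin (t * r)) : ℕ) / r = (b : ℕ) := by
        show ((b : ℕ) * r + (r - 1)) / r = (b : ℕ)
        rw [mul_comm, Nat.mul_add_div hr, Nat.div_eq_of_lt (by omega)]
        omega
      have hs_le : s ≤ (b : ℕ) * r + (r - 1) := by
        have h3 := Nat.div_add_mod s r
        have h4 : s % r < r := Nat.mod_lt _ hr
        have h5 : r * (s / r) ≤ r * (b : ℕ) := Nat.mul_le_mul_left r hlt
        have h6 : (b : ℕ) * r = r * (b : ℕ) := by ring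
        omega
      exact hb ⟨(b : ℕ) * r + (r - 1), hj⟩
        (by simp only [Finset.mem_filter, Finset.mem_univ, true_and]; exact hs_le) hjval
    · intro hb j hj heq2
      have := Nat.div_le_div_right (c := r) hj
      omega
  rw [heq, card_filter_lt t (s / r) hdr]

/-- an `(n,k,l,r)`-FRC with `l, r ≥ 1` has normalized worst-case squared
error `err(G,s) = (l/k)·⌊s/r⌋` for any `0 ≤ s ≤ n` (here `n = t·r`, `k = t·l`). -/
theorem stmt7 (t l r : ℕ) (hl : 1 ≤ l) (hr : 1 ≤ r) (s : ℕ) (hs : s ≤ t * r) :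
    err (FRC t l r) s = ((l : ℝ) / ((t * l : ℕ) : ℝ)) * ((s / r : ℕ) : ℝ) := by
  classical
  have hcardN : Fintype.card (Fin (t * r)) = t * r := Fintype.card_fin _
  set W : Finset (Fin (t * r)) := univ.filter (fun j => s ≤ (j : ℕ)) with hW
  have hWcard : W.card = t * r - s := filter_ge_card (t * r) s hs
  have hbound : ∀ U : Finset (Fin (t * r)),
      sqErr (FRC t l r) U ≤ (l : ℝ) * ((s / r : ℕ) : ℝ) ∨ True := fun _ => Or.inr trivial
  have hbound' : ∀ U : Finset (Fin (t * r)), U.card = Fintype.card (Fin (t * r)) - s →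
      sqErr (FRC t l r) U ≤ (l : ℝ) * ((s / r : ℕ) : ℝ) := by
    intro U hU
    rw [sqErr_FRC t l r hr U]
    rw [hcardN] at hU
    have h1 := deadSet_card_le t r s hr U hU hs
    have h2 : ((deadSet t r U).card : ℝ) ≤ ((s / r : ℕ) : ℝ) := by exact_mod_cast h1
    exact mul_le_mul_of_nonneg_left h2 (by positivity)
  have hne : Nonempty {U : Finset (Fin (t * r)) // U.card = Fintype.card (Fin (t * r)) - s} :=
    ⟨⟨W, by rw [hcardN, hWcard]⟩⟩
  have hsup : (⨆ U : {U : Finset (Fin (t * r)) // U.card = Fintype.card (Fin (t * r)) - s},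
      sqErr (FRC t l r) U.1) = (l : ℝ) * ((s / r : ℕ) : ℝ) := by
    apply le_antisymm
    · exact ciSup_le (fun U => hbound' U.1 U.2)
    · have hb : BddAbove (Set.range
          fun U : {U : Finset (Fin (t * r)) // U.card = Fintype.card (Fin (t * r)) - s} =>
            sqErr (FRC t l r) U.1) := by
        refine ⟨(l : ℝ) * ((s / r : ℕ) : ℝ), ?_⟩
        rintro x ⟨U, rfl⟩
        exact hbound' U.1 U.2
      have h3 := le_ciSup hb
        (⟨W, by rw [hcardN, hWcard]⟩ :
          {U : Finset (Fin (t * r)) // U.card = Fintype.card (Fin (t * r)) - s})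
      refine le_trans (le_of_eq ?_) h3
      rw [sqErr_FRC t l r hr W]
      rw [show (deadSet t r W).card = s / r from deadSet_W t r s hr hs]
  unfold err
  rw [hsup]
  simp only [Fintype.card_fin]
  push_cast
  ring
end

section
/- Let G^{F₁} be an (n₁,k₁,l₁,r₁)-FRC and G^{F₂} be an (n₂,k₂,l₂,r₂)-FRC with l₁,l₂,r₁,r₂ ≥ 1. Then for every integer 0 ≤ s ≤ n₁n₂, the Kronecker product satisfies err(G^{F₁} ⊗ G^{F₂}, s) = (l₁l₂/(k₁k₂))·⌊s/(r₁r₂)⌋; equivalently, err(G^{F₁} ⊗ G^{F₂}, s) = (l₁/k₁)·(l₂/k₂)·⌊s/(r₁r₂)⌋. -/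
/-!
Both FRCs, and hence their Kronecker product, are group matrices: rows and columns are sorted
into groups, and an entry is `1` exactly when its row and its column lie in the same group. For
such a matrix the optimal decoding error on a set `U` of surviving columns is the number of rows
whose group has no column in `U`. In the product every group has `l₁l₂` rows and `r₁r₂` columns,
so `s` stragglers wipe out at most `⌊s/(r₁r₂)⌋` groups, and straggling whole groups attains this.
-/

open Kronecker

open Finset

variable {K N γ : Type*}

def groupMatrix [DecidableEq γ] (row : K → γ) (col : N → γ) : Matrix K N ℝ :=
  Matrix.of fun i j => if row i = col j then 1 else 0

section GroupMatrix

variable [DecidableEq γ] (row : K → γ) (col : N → γ)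

lemma sum_attach_groupMatrix_mul (U : Finset N) (i : K) (w : N → ℝ) :
    ∑ j ∈ U.attach, groupMatrix row col i j.1 * w j.1 = ∑ j ∈ U with col j = row i, w j := by
  rw [sum_attach U fun j => groupMatrix row col i j * w j, sum_filter]
  refine sum_congr rfl fun j _ => ?_
  simp [groupMatrix, eq_comm]

lemma sum_attach_groupMatrix_mul_of_notMem {U : Finset N} {i : K} (hi : row i ∉ U.image col)
    (v : {j // j ∈ U} → ℝ) : ∑ j ∈ U.attach, groupMatrix row col i j.1 * v j = 0 := by
  refine sum_eq_zero fun j _ => ?_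
  have : row i ≠ col j := fun h => hi (mem_image.2 ⟨j, j.2, h.symm⟩)
  simp [groupMatrix, this]

/-- Each uncovered row contributes `1` whatever the decoding vector; the vector spreading weight
`1 / #(U ∩ fibre)` over each fibre of `col` decodes every covered row exactly. -/
theorem sqErr_groupMatrix [Fintype K] (U : Finset N) :
    sqErr (groupMatrix row col) U = #{i | row i ∉ U.image col} := by
  set D : Finset K := {i | row i ∉ U.image col}
  have h_uncovered (v : {j // j ∈ U} → ℝ) (i) (hi : i ∈ D) :
      ((∑ j ∈ U.attach, groupMatrix row col i j.1 * v j) - 1) ^ 2 = 1 := by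
    rw [sum_attach_groupMatrix_mul_of_notMem row col (mem_filter.1 hi).2]
    norm_num
  apply le_antisymm
  · let w : N → ℝ := fun j => (#{j' ∈ U | col j' = col j} : ℝ)⁻¹
    have h_covered (i) (hi : row i ∈ U.image col) :
        ∑ j ∈ U with col j = row i, w j = 1 := by
      obtain ⟨j₀, hj₀, hj₀i⟩ := mem_image.1 hi
      have hpos : 0 < #{j ∈ U | col j = row i} := card_pos.2 ⟨j₀, mem_filter.2 ⟨hj₀, hj₀i⟩⟩
      rw [sum_congr rfl fun j hj => show w j = (#{j' ∈ U | col j' = row i} : ℝ)⁻¹ by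
        simp only [w, (mem_filter.1 hj).2], sum_const, nsmul_eq_mul]
      field_simp
    have hbdd : BddBelow (Set.range fun v : {j // j ∈ U} → ℝ =>
        ∑ i, ((∑ j ∈ U.attach, groupMatrix row col i j.1 * v j) - 1) ^ 2) :=
      ⟨0, Set.forall_mem_range.2 fun v => sum_nonneg fun i _ => sq_nonneg _⟩
    refine (ciInf_le hbdd fun j => w j.1).trans_eq ?_
    rw [← sum_boole]
    refine sum_congr rfl fun i _ => ?_
    by_cases hi : row i ∈ U.image col
    · rw [sum_attach_groupMatrix_mul, h_covered i hi, if_neg (by simpa [D] using hi)]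
      norm_num
    · rw [h_uncovered _ i (by simpa [D] using hi), if_pos (by simpa [D] using hi)]
  · refine le_ciInf fun v => ?_
    calc (#D : ℝ) = ∑ i ∈ D, ((∑ j ∈ U.attach, groupMatrix row col i j.1 * v j) - 1) ^ 2 := by
          rw [sum_congr rfl (h_uncovered v), sum_const, nsmul_one]
      _ ≤ _ := sum_le_sum_of_subset_of_nonneg (subset_univ D) fun i _ _ => sq_nonneg _

lemma groupMatrix_kronecker {K' N' γ' : Type*} [DecidableEq γ'] (row' : K' → γ') (col' : N' → γ') :
    groupMatrix row col ⊗ₖ groupMatrix row' col' =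
      groupMatrix (Prod.map row row') (Prod.map col col') := by
  ext ⟨i, i'⟩ ⟨j, j'⟩
  by_cases h : row i = col j <;> by_cases h' : row' i' = col' j' <;>
    simp [groupMatrix, Matrix.kroneckerMap_apply, h, h']

end GroupMatrix

lemma card_filter_prodMap_eq {K' γ' : Type*} [Fintype K] [Fintype K'] [DecidableEq γ]
    [DecidableEq γ'] (row : K → γ) (row' : K' → γ') (c : γ × γ') :
    #{x | Prod.map row row' x = c} = #{i | row i = c.1} * #{i | row' i = c.2} := by
  rw [← card_product, ← filter_product, univ_product_univ]
  simp [Prod.ext_iff]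

section Counting

variable [Fintype K] [DecidableEq γ] {row : K → γ} {col : N → γ} {L R : ℕ}

lemma card_filter_mem_eq_mul (hrow : ∀ c, #{i | row i = c} = L) (D : Finset γ) :
    #{i | row i ∈ D} = L * #D := by
  rw [card_eq_sum_card_fiberwise (s := {i | row i ∈ D}) (t := D) fun i hi => (mem_filter.1 hi).2,
    sum_congr rfl fun c hc => ?_, sum_const, smul_eq_mul, mul_comm]
  rw [← hrow c]
  congr 1
  ext i
  simp only [mem_filter, mem_univ, true_and]
  exact ⟨And.right, fun h => ⟨h ▸ hc, h⟩⟩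

variable [Fintype γ]

lemma sqErr_groupMatrix_eq_mul (hrow : ∀ c, #{i | row i = c} = L) (U : Finset N) :
    sqErr (groupMatrix row col) U = (L * #(U.image col)ᶜ : ℕ) := by
  rw [sqErr_groupMatrix, ← card_filter_mem_eq_mul hrow]
  simp only [mem_compl]

variable [Fintype N]

lemma mul_card_compl_image_add_card_le (hcol : ∀ c, #{j | col j = c} = R) (U : Finset N) :
    R * #(U.image col)ᶜ + #U ≤ Fintype.card N := by
  classical
  rw [← card_filter_mem_eq_mul hcol, ← card_union_of_disjoint]
  · exact card_le_univ _
  · refine disjoint_left.2 fun j hj hjU => ?_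
    exact mem_compl.1 (mem_filter.1 hj).2 (mem_image_of_mem col hjU)

/-- Straggle every column of `s / R` whole groups, and make up the count with arbitrary columns. -/
lemma exists_card_eq_le_card_compl_image (hcol : ∀ c, #{j | col j = c} = R) {s : ℕ}
    (hs : s ≤ Fintype.card N) :
    ∃ U : Finset N, #U = Fintype.card N - s ∧ s / R ≤ #(U.image col)ᶜ := by
  classical
  have hcard : R * Fintype.card γ = Fintype.card N := by
    simpa using (card_filter_mem_eq_mul hcol univ).symm
  obtain ⟨D, -, hD⟩ := exists_subset_card_eq (s := (univ : Finset γ)) (n := s / R) <| by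
    rw [card_univ]
    exact Nat.div_le_of_le_mul (hcard ▸ hs)
  have hC : #{j | col j ∈ D} ≤ s := by
    rw [card_filter_mem_eq_mul hcol, hD, mul_comm]
    exact Nat.div_mul_le_self s R
  obtain ⟨S, hCS, -, hS⟩ := exists_subsuperset_card_eq (subset_univ _) hC (by simpa using hs)
  refine ⟨Sᶜ, by rw [card_compl, hS], hD ▸ card_le_card fun c hc => mem_compl.2 fun hcU => ?_⟩
  obtain ⟨j, hjU, rfl⟩ := mem_image.1 hcU
  exact mem_compl.1 hjU (hCS (mem_filter.2 ⟨mem_univ j, hc⟩))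

theorem err_groupMatrix (hrow : ∀ c, #{i | row i = c} = L) (hcol : ∀ c, #{j | col j = c} = R)
    (hR : 0 < R) {s : ℕ} (hs : s ≤ Fintype.card N) :
    err (groupMatrix row col) s = 1 / Fintype.card K * (L * (s / R) : ℕ) := by
  obtain ⟨U₀, hU₀, hq⟩ := exists_card_eq_le_card_compl_image hcol hs
  have : Nonempty {U : Finset N // #U = Fintype.card N - s} := ⟨⟨U₀, hU₀⟩⟩
  rw [err]
  congr 1
  refine le_antisymm (ciSup_le fun U => ?_)
    (le_ciSup_of_le (Set.finite_range _).bddAbove ⟨U₀, hU₀⟩ ?_)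
  · have := mul_card_compl_image_add_card_le hcol U.1
    rw [sqErr_groupMatrix_eq_mul hrow, Nat.cast_le]
    refine Nat.mul_le_mul_left L ((Nat.le_div_iff_mul_le hR).2 ?_)
    rw [U.2, mul_comm] at this
    omega
  · rw [sqErr_groupMatrix_eq_mul hrow, Nat.cast_le]
    exact Nat.mul_le_mul_left L hq

end Counting

lemma FRC_eq_groupMatrix (t l r : ℕ) : FRC t l r = groupMatrix Fin.divNat Fin.divNat := by
  ext i j
  simp [FRC, groupMatrix, Fin.ext_iff, Fin.coe_divNat]

lemma card_filter_divNat_eq {t l : ℕ} (c : Fin t) : #{i : Fin (t * l) | i.divNat = c} = l := by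
  rw [card_equiv finProdFinEquiv.symm (t := {x | x.1 = c}) (by simp [finProdFinEquiv_symm_apply]),
    ← univ_product_univ, filter_product_left (p := (· = c))]
  simp [filter_eq']

theorem stmt8_general (t₁ l₁ r₁ t₂ l₂ r₂ : ℕ)
    (hr₁ : 1 ≤ r₁) (hr₂ : 1 ≤ r₂)
    (s : ℕ) (hs : s ≤ (t₁ * r₁) * (t₂ * r₂)) :
    err (FRC t₁ l₁ r₁ ⊗ₖ FRC t₂ l₂ r₂) s
      = (((l₁ * l₂ : ℕ) : ℝ) / (((t₁ * l₁) * (t₂ * l₂) : ℕ) : ℝ)) *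
          ((s / (r₁ * r₂) : ℕ) : ℝ) := by
  have hfibre {a₁ a₂ : ℕ} (c : Fin t₁ × Fin t₂) :
      #{x : Fin (t₁ * a₁) × Fin (t₂ * a₂) | Prod.map Fin.divNat Fin.divNat x = c} = a₁ * a₂ := by
    rw [card_filter_prodMap_eq, card_filter_divNat_eq, card_filter_divNat_eq]
  rw [FRC_eq_groupMatrix, FRC_eq_groupMatrix, groupMatrix_kronecker,
    err_groupMatrix hfibre hfibre (by positivity) (by simpa using hs)]
  simp only [Fintype.card_prod, Fintype.card_fin]
  push_cast
  ring

/-- the Kronecker product of an `(n₁,k₁,l₁,r₁)`-FRC and an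
`(n₂,k₂,l₂,r₂)`-FRC has normalized worst-case squared error
`(l₁l₂/(k₁k₂))·⌊s/(r₁r₂)⌋` for any `0 ≤ s ≤ n₁n₂`. -/
theorem stmt8 (t₁ l₁ r₁ t₂ l₂ r₂ : ℕ)
    (hl₁ : 1 ≤ l₁) (hr₁ : 1 ≤ r₁) (hl₂ : 1 ≤ l₂) (hr₂ : 1 ≤ r₂)
    (s : ℕ) (hs : s ≤ (t₁ * r₁) * (t₂ * r₂)) :
    err (FRC t₁ l₁ r₁ ⊗ₖ FRC t₂ l₂ r₂) s
      = (((l₁ * l₂ : ℕ) : ℝ) / (((t₁ * l₁) * (t₂ * l₂) : ℕ) : ℝ)) *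
          ((s / (r₁ * r₂) : ℕ) : ℝ) :=
  stmt8_general t₁ l₁ r₁ t₂ l₂ r₂ hr₁ hr₂ s hs
end

section
/- Let G^{B₁} be an (n₁,k₁,l₁,λ₁)-GC and G^{B₂} be an (n₂,k₂,l₂,λ₂)-GC with l₁ > λ₁ ≥ 0 and l₂ > λ₂ ≥ 0. Then for every integer 0 ≤ s ≤ n₁n₂, err(G^{B₁} ⊗ G^{B₂}, s) ≤ 1 − (l₁l₂)²(n₁n₂ − s)/(k₁k₂(d + λ₁λ₂(n₁n₂ − s))), where d = (l₁−λ₁)(l₂−λ₂) + n₂(l₁λ₂ − λ₁λ₂) + n₁(λ₁l₂ − λ₁λ₂). -/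
/-!
Decode with a constant vector `c • 1`. Writing `g_j` for the columns of `G = G₁ ⊗ G₂` and
`m = |U|`, the error is the quadratic `c² A - 2 c B + k` with `B = ∑_{j ∈ U} ∑_i G i j = m l₁ l₂`
and `A = ∑_{j, j' ∈ U} ⟨g_j, g_j'⟩`, so it is at most `k - B² / A'` for any `A' ≥ A`.
The Gram matrix of `G` is the Kronecker product of the Gram matrices of `G₁` and `G₂`, so
`⟨g_j, g_j'⟩` is `l₁` or `λ₁` times `l₂` or `λ₂` according to which coordinates of `j` and `j'`
agree. For fixed `j`, at most `n₂` indices `j'` share its first coordinate and at most `n₁` its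
second one, which gives `A ≤ m (d + λ₁ λ₂ m)`.
-/

open Kronecker

open Finset Matrix

section DecodingError

variable {K N : Type*} [Fintype K]

theorem sqErr_le_of_const (G : Matrix K N ℝ) (U : Finset N) (c : ℝ) :
    sqErr G U ≤ ∑ i, (c * ∑ j ∈ U, G i j - 1) ^ 2 := by
  refine (ciInf_le ⟨0, ?_⟩ fun _ => c).trans_eq ?_
  · rintro x ⟨v, rfl⟩
    positivity
  · congr! 3 with i
    rw [sum_attach U fun j => G i j * c, ← sum_mul, mul_comm]

-- For `A = 0` the decoder `c = B / A` is `0` (junk division) and both sides equal `card K`.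
theorem sqErr_le_card_sub (G : Matrix K N ℝ) (U : Finset N) {A : ℝ}
    (hA : ∑ i, (∑ j ∈ U, G i j) ^ 2 ≤ A) :
    sqErr G U ≤ Fintype.card K - (∑ j ∈ U, ∑ i, G i j) ^ 2 / A := by
  rw [sum_comm]
  set B := ∑ i, ∑ j ∈ U, G i j
  have expand : ∑ i, (B / A * ∑ j ∈ U, G i j - 1) ^ 2
      = (B / A) ^ 2 * ∑ i, (∑ j ∈ U, G i j) ^ 2 - 2 * (B / A) * B + Fintype.card K := by
    simp only [sub_sq, mul_pow, sum_add_distrib, sum_sub_distrib, ← mul_sum, one_pow, sum_const,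
      card_univ, nsmul_eq_mul, mul_one, B]
    ring
  calc sqErr G U ≤ ∑ i, (B / A * ∑ j ∈ U, G i j - 1) ^ 2 := sqErr_le_of_const G U _
    _ ≤ (B / A) ^ 2 * A - 2 * (B / A) * B + Fintype.card K := by rw [expand]; gcongr
    _ = Fintype.card K - B ^ 2 / A := by
      rcases eq_or_ne A 0 with rfl | hA0
      · simp
      · field_simp
        ring

theorem sum_sq_sum_eq_sum_sum_gram (G : Matrix K N ℝ) (U : Finset N) :
    ∑ i, (∑ j ∈ U, G i j) ^ 2 = ∑ j ∈ U, ∑ j' ∈ U, (Gᵀ * G) j j' := by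
  simp only [sq, sum_mul_sum, mul_apply, transpose_apply]
  rw [sum_comm]
  exact sum_congr rfl fun j _ => sum_comm

theorem err_le_of_forall_sqErr_le [Fintype N] (G : Matrix K N ℝ) {s : ℕ} {E : ℝ}
    (hE : ∀ U : Finset N, #U = Fintype.card N - s → sqErr G U ≤ E) :
    err G s ≤ E / Fintype.card K := by
  obtain ⟨U, -, hU⟩ := exists_subset_card_eq (s := (univ : Finset N)) (n := Fintype.card N - s)
    (by simp)
  have : Nonempty {U : Finset N // #U = Fintype.card N - s} := ⟨⟨U, hU⟩⟩
  rw [err, one_div_mul_eq_div]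
  gcongr
  exact ciSup_le fun U => hE U.1 U.2

end DecodingError

/-- The Gram matrix of an `(n, k, l, λ)`-GC. -/
def diagOffDiag (N : Type*) [DecidableEq N] (l lam : ℝ) : Matrix N N ℝ :=
  of fun j j' => if j = j' then l else lam

theorem transpose_mul_self_eq_diagOffDiag {K N : Type*} [Fintype K] [DecidableEq N]
    {G : Matrix K N ℝ} {l lam : ℝ}
    (hbin : ∀ i j, G i j = 0 ∨ G i j = 1) (hcol : ∀ j, ∑ i, G i j = l)
    (hint : ∀ j j', j ≠ j' → ∑ i, G i j * G i j' = lam) :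
    Gᵀ * G = diagOffDiag N l lam := by
  ext j j'
  simp only [mul_apply, transpose_apply, diagOffDiag, of_apply]
  split_ifs with h
  · subst h
    rw [← hcol j]
    exact sum_congr rfl fun i _ => by rcases hbin i j with h | h <;> simp [h]
  · exact hint j j' h

section Kronecker

variable {K₁ K₂ N₁ N₂ : Type*} [Fintype K₁] [Fintype K₂]

theorem kronecker_gram (A : Matrix K₁ N₁ ℝ) (B : Matrix K₂ N₂ ℝ) :
    (A ⊗ₖ B)ᵀ * (A ⊗ₖ B) = (Aᵀ * A) ⊗ₖ (Bᵀ * B) := by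
  rw [mul_kronecker_mul, ← kroneckerMap_transpose]

theorem sum_kronecker_apply (A : Matrix K₁ N₁ ℝ) (B : Matrix K₂ N₂ ℝ) (j : N₁ × N₂) :
    ∑ i, (A ⊗ₖ B) i j = (∑ i, A i j.1) * ∑ i, B i j.2 := by
  rw [Fintype.sum_prod_type, sum_mul_sum]
  rfl

end Kronecker

section Counting

theorem card_filter_snd_eq_le {α β : Type*} [Fintype α] [DecidableEq β] (U : Finset (α × β))
    (y : β) :
    #{x ∈ U | y = x.2} ≤ Fintype.card α := by
  calc #{x ∈ U | y = x.2} ≤ #((univ : Finset α) ×ˢ {y}) :=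
        card_le_card fun x hx => by simp_all
    _ = Fintype.card α := by simp

theorem card_filter_fst_eq_le {α β : Type*} [Fintype β] [DecidableEq α] (U : Finset (α × β))
    (x : α) :
    #{y ∈ U | x = y.1} ≤ Fintype.card β := by
  calc #{y ∈ U | x = y.1} ≤ #({x} ×ˢ (univ : Finset β)) :=
        card_le_card fun y hy => by simp_all
    _ = Fintype.card β := by simp

variable {α β : Type*} [Fintype α] [Fintype β] [DecidableEq α] [DecidableEq β]

theorem sum_diagOffDiag_kronecker_le (U : Finset (α × β)) {j : α × β} (hj : j ∈ U)
    {a b c e : ℝ} (hb : 0 ≤ b) (hba : b ≤ a) (he : 0 ≤ e) (hec : e ≤ c) :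
    ∑ j' ∈ U, (diagOffDiag α a b ⊗ₖ diagOffDiag β c e) j j'
      ≤ (a - b) * (c - e) + Fintype.card β * (a * e - b * e)
        + Fintype.card α * (b * c - b * e) + b * e * #U := by
  have split : ∀ j', (diagOffDiag α a b ⊗ₖ diagOffDiag β c e) j j'
      = (a - b) * (c - e) * (if j = j' then 1 else 0) + (a - b) * e * (if j.1 = j'.1 then 1 else 0)
        + b * (c - e) * (if j.2 = j'.2 then 1 else 0) + b * e := by
    intro j'
    simp only [kroneckerMap_apply, diagOffDiag, of_apply, Prod.ext_iff]
    split_ifs <;> simp_all <;> ring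
  simp only [split, sum_add_distrib, ← mul_sum, sum_ite_eq, hj, if_true, sum_boole, sum_const,
    nsmul_eq_mul]
  have h₁ : (#{j' ∈ U | j.1 = j'.1} : ℝ) ≤ Fintype.card β := by
    exact_mod_cast card_filter_fst_eq_le U j.1
  have h₂ : (#{j' ∈ U | j.2 = j'.2} : ℝ) ≤ Fintype.card α := by
    exact_mod_cast card_filter_snd_eq_le U j.2
  have : 0 ≤ (a - b) * e := mul_nonneg (sub_nonneg.2 hba) he
  have : 0 ≤ b * (c - e) := mul_nonneg hb (sub_nonneg.2 hec)
  nlinarith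

end Counting

section KroneckerCode

variable {K₁ K₂ N₁ N₂ : Type*} [Fintype K₁] [Fintype K₂] [Fintype N₁] [Fintype N₂]
  [DecidableEq N₁] [DecidableEq N₂]

theorem sqErr_kronecker_le {G₁ : Matrix K₁ N₁ ℝ} {G₂ : Matrix K₂ N₂ ℝ} {l₁ lam₁ l₂ lam₂ : ℝ}
    (hgram₁ : G₁ᵀ * G₁ = diagOffDiag N₁ l₁ lam₁) (hcol₁ : ∀ j, ∑ i, G₁ i j = l₁)
    (hgram₂ : G₂ᵀ * G₂ = diagOffDiag N₂ l₂ lam₂) (hcol₂ : ∀ j, ∑ i, G₂ i j = l₂)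
    (hlam₁ : 0 ≤ lam₁) (hl₁ : lam₁ ≤ l₁) (hlam₂ : 0 ≤ lam₂) (hl₂ : lam₂ ≤ l₂)
    (U : Finset (N₁ × N₂)) :
    sqErr (G₁ ⊗ₖ G₂) U ≤ Fintype.card K₁ * Fintype.card K₂ - #U * (l₁ * l₂) ^ 2 /
      ((l₁ - lam₁) * (l₂ - lam₂) + Fintype.card N₂ * (l₁ * lam₂ - lam₁ * lam₂)
        + Fintype.card N₁ * (lam₁ * l₂ - lam₁ * lam₂) + lam₁ * lam₂ * #U) := by
  set D := (l₁ - lam₁) * (l₂ - lam₂) + Fintype.card N₂ * (l₁ * lam₂ - lam₁ * lam₂)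
    + Fintype.card N₁ * (lam₁ * l₂ - lam₁ * lam₂) + lam₁ * lam₂ * #U
  have hsum : ∑ j ∈ U, ∑ i, (G₁ ⊗ₖ G₂) i j = #U * (l₁ * l₂) := by
    simp only [sum_kronecker_apply, hcol₁, hcol₂, sum_const, nsmul_eq_mul]
  have hsq : ∑ i, (∑ j ∈ U, (G₁ ⊗ₖ G₂) i j) ^ 2 ≤ #U * D := by
    rw [sum_sq_sum_eq_sum_sum_gram, kronecker_gram, hgram₁, hgram₂]
    calc _ ≤ ∑ _j ∈ U, D :=
          sum_le_sum fun j hj => sum_diagOffDiag_kronecker_le U hj hlam₁ hl₁ hlam₂ hl₂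
      _ = #U * D := by rw [sum_const, nsmul_eq_mul]
  have hbound := sqErr_le_card_sub _ U hsq
  rw [hsum, Fintype.card_prod, Nat.cast_mul] at hbound
  rcases eq_or_ne (#U : ℝ) 0 with hU | hU
  · simpa [hU] using hbound
  · rwa [mul_pow, sq, mul_assoc, mul_div_mul_left _ _ hU] at hbound

end KroneckerCode

/-- for an `(n₁,k₁,l₁,λ₁)`-GC and an `(n₂,k₂,l₂,λ₂)`-GC with
`l₁ > λ₁ ≥ 0` and `l₂ > λ₂ ≥ 0`, the normalized worst-case squared error of their
Kronecker product with `0 ≤ s ≤ n₁n₂` stragglers is at most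
`1 − (l₁l₂)²(n₁n₂ − s)/(k₁k₂(d + λ₁λ₂(n₁n₂ − s)))` with
`d = (l₁−λ₁)(l₂−λ₂) + n₂(l₁λ₂ − λ₁λ₂) + n₁(λ₁l₂ − λ₁λ₂)`. -/
theorem stmt11 (n₁ k₁ l₁ lam₁ n₂ k₂ l₂ lam₂ : ℕ)
    (hl₁ : lam₁ < l₁) (hl₂ : lam₂ < l₂)
    (G₁ : Matrix (Fin k₁) (Fin n₁) ℝ) (G₂ : Matrix (Fin k₂) (Fin n₂) ℝ)
    (hbin₁ : ∀ i j, G₁ i j = 0 ∨ G₁ i j = 1)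
    (hcol₁ : ∀ j, ∑ i : Fin k₁, G₁ i j = (l₁ : ℝ))
    (hint₁ : ∀ j j' : Fin n₁, j ≠ j' → ∑ i : Fin k₁, G₁ i j * G₁ i j' = (lam₁ : ℝ))
    (hbin₂ : ∀ i j, G₂ i j = 0 ∨ G₂ i j = 1)
    (hcol₂ : ∀ j, ∑ i : Fin k₂, G₂ i j = (l₂ : ℝ))
    (hint₂ : ∀ j j' : Fin n₂, j ≠ j' → ∑ i : Fin k₂, G₂ i j * G₂ i j' = (lam₂ : ℝ))
    (s : ℕ) (hs : s ≤ n₁ * n₂)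
    (d : ℝ)
    (hd : d = ((l₁ : ℝ) - lam₁) * ((l₂ : ℝ) - lam₂)
      + (n₂ : ℝ) * ((l₁ : ℝ) * lam₂ - (lam₁ : ℝ) * lam₂)
      + (n₁ : ℝ) * ((lam₁ : ℝ) * l₂ - (lam₁ : ℝ) * lam₂)) :
    err (G₁ ⊗ₖ G₂) s
      ≤ 1 - ((l₁ : ℝ) * l₂) ^ 2 * ((n₁ : ℝ) * n₂ - s) /
          ((k₁ : ℝ) * k₂ * (d + (lam₁ : ℝ) * lam₂ * ((n₁ : ℝ) * n₂ - s))) := by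
  have hm : ∀ U : Finset (Fin n₁ × Fin n₂), #U = Fintype.card (Fin n₁ × Fin n₂) - s →
      (#U : ℝ) = n₁ * n₂ - s := by
    intro U hU
    rw [hU, Fintype.card_prod, Fintype.card_fin, Fintype.card_fin, Nat.cast_sub hs, Nat.cast_mul]
  have hU : ∀ U : Finset (Fin n₁ × Fin n₂), #U = Fintype.card (Fin n₁ × Fin n₂) - s →
      sqErr (G₁ ⊗ₖ G₂) U ≤ k₁ * k₂ - (n₁ * n₂ - s) * (l₁ * l₂) ^ 2 /
        (d + lam₁ * lam₂ * (n₁ * n₂ - s)) := by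
    intro U hU
    have hbound := sqErr_kronecker_le (transpose_mul_self_eq_diagOffDiag hbin₁ hcol₁ hint₁) hcol₁
      (transpose_mul_self_eq_diagOffDiag hbin₂ hcol₂ hint₂) hcol₂ (Nat.cast_nonneg _)
      (by exact_mod_cast hl₁.le) (Nat.cast_nonneg _) (by exact_mod_cast hl₂.le) U
    rwa [hm U hU, Fintype.card_fin, Fintype.card_fin, Fintype.card_fin, Fintype.card_fin, ← hd]
      at hbound
  refine (err_le_of_forall_sqErr_le _ hU).trans ?_
  rw [Fintype.card_prod, Fintype.card_fin, Fintype.card_fin, Nat.cast_mul]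
  rcases eq_or_ne ((k₁ : ℝ) * k₂) 0 with hk | hk
  · simp [hk]
  · rw [sub_div, div_self hk, div_div, mul_comm _ ((k₁ : ℝ) * k₂), mul_comm ((n₁ : ℝ) * n₂ - s)]
end

section
/- Let G^{B₁} be an (n₁,k₁,l₁,λ₁)-GC and G^{B₂} be an (n₂,k₂,l₂,λ₂)-GC with l₁ ≥ λ₁ ≥ 0 and l₂ ≥ λ₂ ≥ 0, and let G = G^{B₁} ⊗ G^{B₂}. Then for every subset U ⊆ {1,…,n₁n₂} with |U| = s̃, one has 1_{s̃}ᵀ G_Uᵀ G_U 1_{s̃} ≤ s̃·d + λ₁λ₂·s̃², where d = (l₁−λ₁)(l₂−λ₂) + n₂(l₁λ₂ − λ₁λ₂) + n₁(λ₁l₂ − λ₁λ₂). -/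
open Kronecker

/-- for an `(n₁,k₁,l₁,λ₁)`-GC `G^{B₁}` and an `(n₂,k₂,l₂,λ₂)`-GC
`G^{B₂}` with `l₁ ≥ λ₁ ≥ 0`, `l₂ ≥ λ₂ ≥ 0`, and `G = G^{B₁} ⊗ G^{B₂}`, for every
subset `U` of the columns of `G` with `|U| = s̃` one has
`1ᵀ G_Uᵀ G_U 1 = ∑_{i∈U} ∑_{j∈U} ⟨col_i, col_j⟩ ≤ s̃·d + λ₁λ₂·s̃²`, where
`d = (l₁−λ₁)(l₂−λ₂) + n₂(l₁λ₂ − λ₁λ₂) + n₁(λ₁l₂ − λ₁λ₂)`. -/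
theorem stmt15 (n₁ k₁ l₁ lam₁ n₂ k₂ l₂ lam₂ : ℕ)
    (hl₁ : lam₁ ≤ l₁) (hl₂ : lam₂ ≤ l₂)
    (G₁ : Matrix (Fin k₁) (Fin n₁) ℝ) (G₂ : Matrix (Fin k₂) (Fin n₂) ℝ)
    (hbin₁ : ∀ i j, G₁ i j = 0 ∨ G₁ i j = 1)
    (hcol₁ : ∀ j, ∑ i : Fin k₁, G₁ i j = (l₁ : ℝ))
    (hint₁ : ∀ j j' : Fin n₁, j ≠ j' → ∑ i : Fin k₁, G₁ i j * G₁ i j' = (lam₁ : ℝ))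
    (hbin₂ : ∀ i j, G₂ i j = 0 ∨ G₂ i j = 1)
    (hcol₂ : ∀ j, ∑ i : Fin k₂, G₂ i j = (l₂ : ℝ))
    (hint₂ : ∀ j j' : Fin n₂, j ≠ j' → ∑ i : Fin k₂, G₂ i j * G₂ i j' = (lam₂ : ℝ))
    (U : Finset (Fin n₁ × Fin n₂))
    (d : ℝ)
    (hd : d = ((l₁ : ℝ) - lam₁) * ((l₂ : ℝ) - lam₂)
      + (n₂ : ℝ) * ((l₁ : ℝ) * lam₂ - (lam₁ : ℝ) * lam₂)
      + (n₁ : ℝ) * ((lam₁ : ℝ) * l₂ - (lam₁ : ℝ) * lam₂)) :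
    ∑ i ∈ U, ∑ j ∈ U, ∑ r : Fin k₁ × Fin k₂, (G₁ ⊗ₖ G₂) r i * (G₁ ⊗ₖ G₂) r j
      ≤ (U.card : ℝ) * d + (lam₁ : ℝ) * lam₂ * (U.card : ℝ) ^ 2 := by
  have hf₁ : ∀ a b : Fin n₁, (∑ r : Fin k₁, G₁ r a * G₁ r b)
      = if a = b then (l₁ : ℝ) else (lam₁ : ℝ) := by
    intro a b
    by_cases h : a = b
    · subst h
      simp only [if_pos rfl]
      rw [← hcol₁ a]
      refine Finset.sum_congr rfl fun r _ => ?_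
      rcases hbin₁ r a with h | h <;> rw [h] <;> ring
    · rw [if_neg h]; exact hint₁ a b h
  have hf₂ : ∀ a b : Fin n₂, (∑ r : Fin k₂, G₂ r a * G₂ r b)
      = if a = b then (l₂ : ℝ) else (lam₂ : ℝ) := by
    intro a b
    by_cases h : a = b
    · subst h
      simp only [if_pos rfl]
      rw [← hcol₂ a]
      refine Finset.sum_congr rfl fun r _ => ?_
      rcases hbin₂ r a with h | h <;> rw [h] <;> ring
    · rw [if_neg h]; exact hint₂ a b h
  set c₂ : ℝ := (lam₁ : ℝ) * ((l₂ : ℝ) - lam₂) with hc₂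
  set c₁ : ℝ := (lam₂ : ℝ) * ((l₁ : ℝ) - lam₁) with hc₁
  set c : ℝ := ((l₁ : ℝ) - lam₁) * ((l₂ : ℝ) - lam₂) with hc
  have hc₂0 : 0 ≤ c₂ := by
    apply mul_nonneg (by positivity)
    have : (lam₂ : ℝ) ≤ (l₂ : ℝ) := by exact_mod_cast hl₂
    linarith
  have hc₁0 : 0 ≤ c₁ := by
    apply mul_nonneg (by positivity)
    have : (lam₁ : ℝ) ≤ (l₁ : ℝ) := by exact_mod_cast hl₁
    linarith
  have hc0 : 0 ≤ c := by
    have h1 : (lam₁ : ℝ) ≤ (l₁ : ℝ) := by exact_mod_cast hl₁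
    have h2 : (lam₂ : ℝ) ≤ (l₂ : ℝ) := by exact_mod_cast hl₂
    apply mul_nonneg <;> linarith
  -- rewrite each term
  have hterm : ∀ i j : Fin n₁ × Fin n₂,
      (∑ r : Fin k₁ × Fin k₂, (G₁ ⊗ₖ G₂) r i * (G₁ ⊗ₖ G₂) r j)
      = (lam₁ : ℝ) * lam₂ + (if i.2 = j.2 then c₂ else 0)
        + (if i.1 = j.1 then c₁ else 0) + (if i = j then c else 0) := by
    intro i j
    have : (∑ r : Fin k₁ × Fin k₂, (G₁ ⊗ₖ G₂) r i * (G₁ ⊗ₖ G₂) r j)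
        = (∑ r₁ : Fin k₁, G₁ r₁ i.1 * G₁ r₁ j.1) * (∑ r₂ : Fin k₂, G₂ r₂ i.2 * G₂ r₂ j.2) := by
      rw [Finset.sum_mul_sum, Fintype.sum_prod_type]
      refine Finset.sum_congr rfl fun r₁ _ => Finset.sum_congr rfl fun r₂ _ => ?_
      simp [Matrix.kroneckerMap_apply]
      ring
    rw [this, hf₁, hf₂]
    have hij : (i = j) ↔ (i.1 = j.1 ∧ i.2 = j.2) := Prod.ext_iff
    by_cases h1 : i.1 = j.1 <;> by_cases h2 : i.2 = j.2 <;>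
      simp only [if_pos, if_neg, h1, h2, hij, not_and, and_self, if_true, if_false] <;>
      simp [h1, h2, hc, hc₁, hc₂] <;> ring
  simp only [hterm]
  simp only [Finset.sum_add_distrib, Finset.sum_const, nsmul_eq_mul]
  set s : ℝ := (U.card : ℝ) with hs
  have hp2 : ∑ i ∈ U, ∑ j ∈ U, (if i.2 = j.2 then c₂ else 0) ≤ s * ((n₁ : ℝ) * c₂) := by
    have h : ∑ i ∈ U, ∑ j ∈ U, (if i.2 = j.2 then c₂ else 0)
        ≤ ∑ _i ∈ U, ((n₁ : ℝ) * c₂) := by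
      refine Finset.sum_le_sum fun i _ => ?_
      rw [← Finset.sum_filter]
      simp only [Finset.sum_const, nsmul_eq_mul]
      have hcard : (U.filter (fun j => i.2 = j.2)).card ≤ n₁ := by
        have : (U.filter (fun j => i.2 = j.2)).card ≤ (Finset.univ : Finset (Fin n₁)).card := by
          apply Finset.card_le_card_of_injOn (fun j => j.1) (fun _ _ => Finset.mem_univ _)
          intro a ha b hb hab
          simp only [Finset.mem_coe, Finset.mem_filter] at ha hb
          exact Prod.ext hab (ha.2.symm.trans hb.2)
        simpa using this
      exact mul_le_mul_of_nonneg_right (by exact_mod_cast hcard) hc₂0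
    simpa [Finset.sum_const, nsmul_eq_mul, hs] using h
  have hp1 : ∑ i ∈ U, ∑ j ∈ U, (if i.1 = j.1 then c₁ else 0) ≤ s * ((n₂ : ℝ) * c₁) := by
    have h : ∑ i ∈ U, ∑ j ∈ U, (if i.1 = j.1 then c₁ else 0)
        ≤ ∑ _i ∈ U, ((n₂ : ℝ) * c₁) := by
      refine Finset.sum_le_sum fun i _ => ?_
      rw [← Finset.sum_filter]
      simp only [Finset.sum_const, nsmul_eq_mul]
      have hcard : (U.filter (fun j => i.1 = j.1)).card ≤ n₂ := by
        have : (U.filter (fun j => i.1 = j.1)).card ≤ (Finset.univ : Finset (Fin n₂)).card := by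
          apply Finset.card_le_card_of_injOn (fun j => j.2) (fun _ _ => Finset.mem_univ _)
          intro a ha b hb hab
          simp only [Finset.mem_coe, Finset.mem_filter] at ha hb
          exact Prod.ext (ha.2.symm.trans hb.2) hab
        simpa using this
      exact mul_le_mul_of_nonneg_right (by exact_mod_cast hcard) hc₁0
    simpa [Finset.sum_const, nsmul_eq_mul, hs] using h
  have hp3 : ∑ i ∈ U, ∑ j ∈ U, (if i = j then c else 0) = s * c := by
    have h : ∑ i ∈ U, ∑ j ∈ U, (if i = j then c else 0) = ∑ _i ∈ U, c := by
      refine Finset.sum_congr rfl fun i hi => ?_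
      rw [Finset.sum_ite_eq U i (fun _ => c), if_pos hi]
    rw [h, Finset.sum_const, nsmul_eq_mul, hs]
  have hd' : s * d + (lam₁ : ℝ) * lam₂ * s ^ 2
      = s * (s * ((lam₁:ℝ) * lam₂)) + (s * ((n₁ : ℝ) * c₂) + s * ((n₂ : ℝ) * c₁) + s * c) := by
    rw [hd, hc, hc₁, hc₂]; ring
  linarith [hp1, hp2, hp3.le]
end
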